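/- arXiv:2407.09465 — 5 statements merged into one kernel-verified Lean document; each statement's English description precedes it below -/
import Mathlib

section
/- Let (Ω, ℬ, P) be a probability space, let 𝒢 and ℋ be independent sub-σ-algebras of ℬ, and let X : Ω → ℝⁿ be square-integrable with E[X] = 0. Then E[‖X‖²] − E[‖E[X|𝒢]‖²] ≥ E[‖E[X|ℋ]‖²], where E[X|𝒢] and E[X|ℋ] denote conditional expectations and ‖·‖ is the Euclidean norm on ℝⁿ. -/
/-!
Write `Y = X - E[X|𝒢]`. Pythagoras gives `E‖X‖² - E‖E[X|𝒢]‖² = E‖Y‖²`. Since `E[X|𝒢]` is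
`𝒢`-measurable and `𝒢` is independent of `ℋ`, `E[E[X|𝒢]|ℋ] = E[E[X|𝒢]] = E[X] = 0`, so
`E[X|ℋ] = E[Y|ℋ]`, and conditional expectation is an `L²` contraction: `E‖E[Y|ℋ]‖² ≤ E‖Y‖²`.
-/

open MeasureTheory ProbabilityTheory

namespace MeasureTheory

variable {α E : Type*} [NormedAddCommGroup E] [InnerProductSpace ℝ E] [CompleteSpace E]
  {m m0 : MeasurableSpace α} {μ : Measure α} {f : α → E}

omit [CompleteSpace E] in
lemma MemLp.integral_norm_sq_eq_norm_toLp_sq (hf : MemLp f 2 μ) :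
    ∫ x, ‖f x‖ ^ 2 ∂μ = ‖hf.toLp f‖ ^ 2 := by
  rw [← real_inner_self_eq_norm_sq, L2.inner_def]
  refine integral_congr_ae ?_
  filter_upwards [hf.coeFn_toLp] with x hx
  rw [hx, real_inner_self_eq_norm_sq]

lemma MemLp.integral_norm_sq_eq_add_condExp [IsFiniteMeasure μ] (hm : m ≤ m0)
    (hf : MemLp f 2 μ) :
    ∫ x, ‖f x‖ ^ 2 ∂μ = ∫ x, ‖μ[f | m] x‖ ^ 2 ∂μ + ∫ x, ‖(f - μ[f | m]) x‖ ^ 2 ∂μ := by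
  have hcond : MemLp (μ[f | m]) 2 μ := hf.condExp one_le_two
  have hproj : (condExpL2 E ℝ hm (hf.toLp f) : Lp E 2 μ) = hcond.toLp _ :=
    Lp.ext ((hf.condExpL2_ae_eq_condExp hm).trans hcond.coeFn_toLp.symm)
  rw [hf.integral_norm_sq_eq_norm_toLp_sq, hcond.integral_norm_sq_eq_norm_toLp_sq,
    (hf.sub hcond).integral_norm_sq_eq_norm_toLp_sq, toLp_sub hf hcond, ← hproj]
  have : Fact (m ≤ m0) := ⟨hm⟩
  rw [Submodule.norm_sq_eq_add_norm_sq_projection (hf.toLp f) (lpMeas E ℝ m 2 μ),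
    Submodule.orthogonalProjectionOnto_orthogonal]
  -- `condExpL2` is by definition the orthogonal projection onto `lpMeas E ℝ m 2 μ`
  rfl

lemma MemLp.integral_norm_sq_condExp_le [IsFiniteMeasure μ] (hm : m ≤ m0) (hf : MemLp f 2 μ) :
    ∫ x, ‖μ[f | m] x‖ ^ 2 ∂μ ≤ ∫ x, ‖f x‖ ^ 2 ∂μ := by
  rw [hf.integral_norm_sq_eq_add_condExp hm]
  exact le_add_of_nonneg_right (integral_nonneg fun x ↦ by positivity)

end MeasureTheory

namespace ProbabilityTheory

variable {Ω E : Type*} [NormedAddCommGroup E] [NormedSpace ℝ E] [CompleteSpace E]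
  {m₁ m₂ m : MeasurableSpace Ω} {μ : Measure Ω} [IsFiniteMeasure μ] {f : Ω → E}

lemma condExp_sub_condExp_ae_eq_of_indep (hle₁ : m₁ ≤ m) (hle₂ : m₂ ≤ m)
    (hindp : Indep m₁ m₂ μ) (hf : Integrable f μ) (hf₀ : ∫ x, f x ∂μ = 0) :
    μ[f - μ[f | m₁] | m₂] =ᵐ[μ] μ[f | m₂] := by
  have hcond : μ[μ[f | m₁] | m₂] =ᵐ[μ] 0 := by
    refine (condExp_indep_eq hle₁ hle₂ stronglyMeasurable_condExp hindp).trans ?_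
    rw [integral_condExp hle₁, hf₀]
    rfl
  filter_upwards [condExp_sub hf integrable_condExp m₂, hcond] with x hsub hzero
  rw [hsub, Pi.sub_apply, hzero, Pi.zero_apply, sub_zero]

end ProbabilityTheory

/-- If `𝒢` and `ℋ` are independent sub-σ-algebras and `X` is a centered
square-integrable random vector, then
`E[‖X‖²] − E[‖E[X|𝒢]‖²] ≥ E[‖E[X|ℋ]‖²]`. -/
theorem sq_norm_condexp_indep_le {Ω : Type*} {mΩ : MeasurableSpace Ω}
    (P : Measure Ω) [IsProbabilityMeasure P]
    {n : ℕ} (𝒢 ℋ : MeasurableSpace Ω) (h𝒢 : 𝒢 ≤ mΩ) (hℋ : ℋ ≤ mΩ)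
    (hIndep : Indep 𝒢 ℋ P)
    (X : Ω → EuclideanSpace ℝ (Fin n)) (hX : MemLp X 2 P)
    (hcent : ∫ ω, X ω ∂P = 0) :
    (∫ ω, ‖X ω‖ ^ 2 ∂P) - ∫ ω, ‖(P[X | 𝒢]) ω‖ ^ 2 ∂P ≥
      ∫ ω, ‖(P[X | ℋ]) ω‖ ^ 2 ∂P := by
  have hpyth := hX.integral_norm_sq_eq_add_condExp h𝒢
  have hresidual : MemLp (X - P[X | 𝒢]) 2 P := hX.sub (hX.condExp one_le_two)
  have hcontr := hresidual.integral_norm_sq_condExp_le hℋ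
  have hsame : ∫ ω, ‖(P[X - P[X | 𝒢] | ℋ]) ω‖ ^ 2 ∂P = ∫ ω, ‖(P[X | ℋ]) ω‖ ^ 2 ∂P :=
    integral_congr_ae <| (condExp_sub_condExp_ae_eq_of_indep h𝒢 hℋ hIndep
      (hX.integrable one_le_two) hcent).mono fun _ hω ↦ congrArg (‖·‖ ^ 2) hω
  linarith
end

section
/- Let (Ω, ℬ, P) be a probability space, let 𝒢 and ℋ be independent sub-σ-algebras of ℬ, and let X : Ω → ℝⁿ be square-integrable with E[X] = 0. Then equality holds in the inequality E[‖X‖²] − E[‖E[X|𝒢]‖²] ≥ E[‖E[X|ℋ]‖²] if and only if X − E[X|𝒢] = E[X|ℋ] almost surely; in particular, equality implies that X − E[X|𝒢] is almost surely equal to an ℋ-measurable random vector. -/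
/-!
Conditional expectation is the orthogonal projection of `L²` onto the subspace of measurable
functions, so `E‖X‖² = E‖X - E[X|𝒢]‖² + E‖E[X|𝒢]‖²`. By independence and centring,
`E[E[X|𝒢]|ℋ] = E[X] = 0`, hence the residual `Z = X - E[X|𝒢]` satisfies `E[Z|ℋ] = E[X|ℋ]`, and
Pythagoras for `ℋ` gives `E‖Z‖² = E‖Z - E[X|ℋ]‖² + E‖E[X|ℋ]‖²`. So the defect in the inequality is
`E‖Z - E[X|ℋ]‖²`, which vanishes exactly when `Z = E[X|ℋ]` almost surely.
-/

open MeasureTheory ProbabilityTheory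

namespace MeasureTheory

variable {α E : Type*} [NormedAddCommGroup E] {m m₀ : MeasurableSpace α} {μ : Measure α}

lemma integral_norm_sub_sq_eq_zero_iff {f g : α → E} (hf : MemLp f 2 μ) (hg : MemLp g 2 μ) :
    ∫ a, ‖f a - g a‖ ^ 2 ∂μ = 0 ↔ f =ᵐ[μ] g := by
  have hint : Integrable (fun a => ‖f a - g a‖ ^ 2) μ := (hf.sub hg).norm.integrable_sq
  rw [integral_eq_zero_iff_of_nonneg (fun a => by positivity) hint]
  simp only [Filter.EventuallyEq, Pi.zero_apply, pow_eq_zero_iff two_ne_zero, norm_eq_zero,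
    sub_eq_zero]

variable [InnerProductSpace ℝ E]

lemma L2.norm_sq_eq_integral_of_ae_eq {F : α →₂[μ] E} {f : α → E} (h : F =ᵐ[μ] f) :
    ‖F‖ ^ 2 = ∫ a, ‖f a‖ ^ 2 ∂μ := by
  rw [← real_inner_self_eq_norm_sq, L2.inner_def]
  refine integral_congr_ae ?_
  filter_upwards [h] with a ha
  rw [ha, real_inner_self_eq_norm_sq]

variable [CompleteSpace E]

lemma norm_sq_eq_norm_sub_condExpL2_sq_add (hm : m ≤ m₀) (F : α →₂[μ] E) :
    ‖F‖ ^ 2 = ‖F - condExpL2 E ℝ hm F‖ ^ 2 + ‖(condExpL2 E ℝ hm F : α →₂[μ] E)‖ ^ 2 := by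
  have : Fact (m ≤ m₀) := ⟨hm⟩
  have horth : inner ℝ (F - condExpL2 E ℝ hm F) (condExpL2 E ℝ hm F : α →₂[μ] E) = 0 :=
    Submodule.starProjection_inner_eq_zero F _ (condExpL2 E ℝ hm F).2
  simp only [sq]
  rw [← norm_add_sq_eq_norm_sq_add_norm_sq_real horth, sub_add_cancel]

lemma integral_norm_sq_eq_integral_norm_sub_condExp_sq_add [IsFiniteMeasure μ]
    (hm : m ≤ m₀) {f : α → E} (hf : MemLp f 2 μ) :
    ∫ a, ‖f a‖ ^ 2 ∂μ = ∫ a, ‖f a - μ[f|m] a‖ ^ 2 ∂μ + ∫ a, ‖μ[f|m] a‖ ^ 2 ∂μ := by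
  have hcond := hf.condExpL2_ae_eq_condExp (𝕜 := ℝ) hm
  rw [← L2.norm_sq_eq_integral_of_ae_eq hf.coeFn_toLp, ← L2.norm_sq_eq_integral_of_ae_eq hcond,
    ← L2.norm_sq_eq_integral_of_ae_eq ?_]
  · exact norm_sq_eq_norm_sub_condExpL2_sq_add hm _
  filter_upwards [Lp.coeFn_sub hf.toLp (condExpL2 E ℝ hm hf.toLp : α →₂[μ] E), hf.coeFn_toLp,
    hcond] with a hsub hf' hcond'
  rw [hsub, Pi.sub_apply, hf', hcond']

end MeasureTheory

namespace ProbabilityTheory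

variable {Ω E : Type*} [NormedAddCommGroup E] [NormedSpace ℝ E] [CompleteSpace E]
  {m₁ m₂ m : MeasurableSpace Ω} {μ : Measure Ω}

lemma condExp_condExp_indep_eq (hle₁ : m₁ ≤ m) (hle₂ : m₂ ≤ m)
    [SigmaFinite (μ.trim hle₁)] [SigmaFinite (μ.trim hle₂)] (hindep : Indep m₁ m₂ μ)
    (f : Ω → E) : μ[μ[f|m₁]|m₂] =ᵐ[μ] fun _ => μ[f] := by
  rw [← integral_condExp hle₁]
  exact condExp_indep_eq hle₁ hle₂ stronglyMeasurable_condExp hindep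

lemma condExp_sub_condExp_indep_eq (hle₁ : m₁ ≤ m) (hle₂ : m₂ ≤ m)
    [SigmaFinite (μ.trim hle₁)] [SigmaFinite (μ.trim hle₂)] (hindep : Indep m₁ m₂ μ)
    {f : Ω → E} (hf : Integrable f μ) (hcent : μ[f] = 0) :
    μ[f - μ[f|m₁]|m₂] =ᵐ[μ] μ[f|m₂] := by
  filter_upwards [condExp_sub hf integrable_condExp m₂,
    condExp_condExp_indep_eq hle₁ hle₂ hindep f] with ω hsub hzero
  rw [hsub, Pi.sub_apply, hzero, hcent, sub_zero]

end ProbabilityTheory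

/-- Equality cases in the inequality `E[‖X‖²] − E[‖E[X|𝒢]‖²] ≥ E[‖E[X|ℋ]‖²]`
for independent sub-σ-algebras `𝒢, ℋ` and centered square-integrable `X`:
equality holds iff `X − E[X|𝒢] = E[X|ℋ]` a.s.; in particular, equality implies
that `X − E[X|𝒢]` is a.s. equal to an `ℋ`-measurable random vector. -/
theorem sq_norm_condexp_indep_eq_iff {Ω : Type*} {mΩ : MeasurableSpace Ω}
    (P : Measure Ω) [IsProbabilityMeasure P]
    {n : ℕ} (𝒢 ℋ : MeasurableSpace Ω) (h𝒢 : 𝒢 ≤ mΩ) (hℋ : ℋ ≤ mΩ)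
    (hIndep : Indep 𝒢 ℋ P)
    (X : Ω → EuclideanSpace ℝ (Fin n)) (hX : MemLp X 2 P)
    (hcent : ∫ ω, X ω ∂P = 0) :
    (((∫ ω, ‖X ω‖ ^ 2 ∂P) - ∫ ω, ‖(P[X | 𝒢]) ω‖ ^ 2 ∂P) =
        ∫ ω, ‖(P[X | ℋ]) ω‖ ^ 2 ∂P ↔
      ∀ᵐ ω ∂P, X ω - (P[X | 𝒢]) ω = (P[X | ℋ]) ω) ∧
    ((((∫ ω, ‖X ω‖ ^ 2 ∂P) - ∫ ω, ‖(P[X | 𝒢]) ω‖ ^ 2 ∂P) =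
        ∫ ω, ‖(P[X | ℋ]) ω‖ ^ 2 ∂P) →
      ∃ Y : Ω → EuclideanSpace ℝ (Fin n), Measurable[ℋ] Y ∧
        ∀ᵐ ω ∂P, X ω - (P[X | 𝒢]) ω = Y ω) := by
  set G := P[X | 𝒢]
  set H := P[X | ℋ]
  have hZ : MemLp (X - G) 2 P := hX.sub (hX.condExp one_le_two)
  have hZH : P[X - G | ℋ] =ᵐ[P] H :=
    condExp_sub_condExp_indep_eq h𝒢 hℋ hIndep (hX.integrable one_le_two) hcent
  have hpyth𝒢 : ∫ ω, ‖X ω‖ ^ 2 ∂P = ∫ ω, ‖(X - G) ω‖ ^ 2 ∂P + ∫ ω, ‖G ω‖ ^ 2 ∂P :=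
    integral_norm_sq_eq_integral_norm_sub_condExp_sq_add h𝒢 hX
  have hpythℋ : ∫ ω, ‖(X - G) ω‖ ^ 2 ∂P =
      ∫ ω, ‖(X - G) ω - H ω‖ ^ 2 ∂P + ∫ ω, ‖H ω‖ ^ 2 ∂P := by
    rw [integral_norm_sq_eq_integral_norm_sub_condExp_sq_add hℋ hZ]
    congr 1 <;> refine integral_congr_ae ?_ <;> filter_upwards [hZH] with ω hω <;> rw [hω]
  have hiff : ∫ ω, ‖X ω‖ ^ 2 ∂P - ∫ ω, ‖G ω‖ ^ 2 ∂P = ∫ ω, ‖H ω‖ ^ 2 ∂P ↔ X - G =ᵐ[P] H := by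
    rw [← integral_norm_sub_sq_eq_zero_iff hZ (hX.condExp one_le_two)]
    constructor <;> intro h <;> linarith
  exact ⟨hiff, fun h => ⟨H, stronglyMeasurable_condExp.measurable, hiff.mp h⟩⟩
end

section
/- Let a, b : [0,1] → [0,∞] be measurable functions such that ∫_t^1 a(s) ds ≥ ∫_0^{1−t} b(s) ds for every t ∈ [0,1]. Then ∫_0^1 b(s)/s ds ≤ ∫_0^1 a(s)/(1−s) ds, where all integrals are Lebesgue integrals with values in [0,∞]. -/
open MeasureTheory Set
open scoped ENNReal

/-!
On `(0, 1]` write `1 / s = 1 + ∫_{t ≤ 1 - s} (1 - t)⁻²` and `1 / (1 - s) = 1 + ∫_{t < s} (1 - t)⁻²`.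
Multiplying by `b s`, resp. `a s`, integrating and swapping the integrals (Tonelli) gives
`∫ b / s = ∫ b + ∫ (1 - t)⁻² ∫_0^{1-t} b dt` and `∫ a / (1 - s) = ∫ a + ∫ (1 - t)⁻² ∫_t^1 a dt`,
and the hypothesis compares the two sides term by term (at `t = 0` for the first term).
-/

section Tonelli

variable {α β : Type*} [MeasurableSpace α] [MeasurableSpace β] {μ : Measure α} {ν : Measure β}
  [SFinite μ] [SFinite ν] {f : α → ℝ≥0∞} {g : β → ℝ≥0∞}

theorem lintegral_mul_setLIntegral_comm (hf : Measurable f) (hg : Measurable g)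
    {r : α → β → Prop} (hr : MeasurableSet {p : α × β | r p.1 p.2}) :
    ∫⁻ x, f x * ∫⁻ y in {y | r x y}, g y ∂ν ∂μ =
      ∫⁻ y, g y * ∫⁻ x in {x | r x y}, f x ∂μ ∂ν := by
  set F : α × β → ℝ≥0∞ := {p | r p.1 p.2}.indicator fun p ↦ f p.1 * g p.2
  have hF : Measurable F := ((hf.comp measurable_fst).mul (hg.comp measurable_snd)).indicator hr
  have slice_left : ∀ x, f x * ∫⁻ y in {y | r x y}, g y ∂ν = ∫⁻ y, F (x, y) ∂ν := by
    intro x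
    have hs : MeasurableSet {y | r x y} := measurable_prodMk_left hr
    rw [← lintegral_indicator hs, ← lintegral_const_mul _ (hg.indicator hs)]
    congr 1 with y
    by_cases hxy : r x y <;> simp [F, hxy]
  have slice_right : ∀ y, g y * ∫⁻ x in {x | r x y}, f x ∂μ = ∫⁻ x, F (x, y) ∂μ := by
    intro y
    have hs : MeasurableSet {x | r x y} := measurable_prodMk_right hr
    rw [← lintegral_indicator hs, ← lintegral_const_mul _ (hf.indicator hs)]
    congr 1 with x
    by_cases hxy : r x y <;> simp [F, hxy, mul_comm]
  simp_rw [slice_left, slice_right]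
  exact lintegral_lintegral_swap (f := fun x y ↦ F (x, y)) hF.aemeasurable

end Tonelli

section Intervals

variable {α : Type*} [LinearOrder α] [TopologicalSpace α] [OrderClosedTopology α]
  [MeasurableSpace α] [OpensMeasurableSpace α] {μ : Measure α} {a b c : α}

theorem restrict_Ioc_restrict_Iic (hcb : c ≤ b) :
    (μ.restrict (Ioc a b)).restrict (Iic c) = μ.restrict (Ioc a c) := by
  rw [Measure.restrict_restrict measurableSet_Iic, Iic_inter_Ioc_of_le hcb]

theorem restrict_Ioc_restrict_Ioi (hac : a ≤ c) :
    (μ.restrict (Ioc a b)).restrict (Ioi c) = μ.restrict (Ioc c b) := by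
  rw [Measure.restrict_restrict measurableSet_Ioi, inter_comm, Ioc_inter_Ioi, sup_eq_right.2 hac]

theorem restrict_Ioc_restrict_Iio [NullSingletonClass μ] (hcb : c ≤ b) :
    (μ.restrict (Ioc a b)).restrict (Iio c) = μ.restrict (Ioc a c) := by
  rw [Measure.restrict_congr_set Iio_ae_eq_Iic, restrict_Ioc_restrict_Iic hcb]

end Intervals

theorem inv_ofReal_one_sub_eq_one_add_lintegral {c : ℝ} (hc0 : 0 ≤ c) (hc1 : c < 1) :
    (ENNReal.ofReal (1 - c))⁻¹ = 1 + ∫⁻ t in Ioc 0 c, ENNReal.ofReal ((1 - t) ^ 2)⁻¹ := by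
  have hderiv : ∀ t ∈ uIcc 0 c, HasDerivAt (fun t ↦ (1 - t)⁻¹) ((1 - t) ^ 2)⁻¹ t := by
    intro t ht
    rw [uIcc_of_le hc0] at ht
    have : 1 - t ≠ 0 := by linarith [ht.2]
    simpa using ((hasDerivAt_id t).const_sub 1).fun_inv this
  have hcont : ContinuousOn (fun t : ℝ ↦ ((1 - t) ^ 2)⁻¹) (Icc 0 c) :=
    (continuousOn_const.sub continuousOn_id).pow 2 |>.inv₀ fun t ht ↦ by
      have : 1 - t ≠ 0 := by linarith [ht.2]
      exact pow_ne_zero 2 this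
  have hint : IntegrableOn (fun t : ℝ ↦ ((1 - t) ^ 2)⁻¹) (Ioc 0 c) :=
    hcont.integrableOn_Icc.mono_set Ioc_subset_Icc_self
  have hFTC : ∫ t in Ioc 0 c, ((1 - t) ^ 2)⁻¹ = (1 - c)⁻¹ - 1 := by
    rw [← intervalIntegral.integral_of_le hc0, intervalIntegral.integral_eq_sub_of_hasDerivAt hderiv
      (intervalIntegrable_iff_integrableOn_Ioc_of_le hc0 |>.2 hint)]
    simp
  rw [← ofReal_integral_eq_lintegral_ofReal hint (.of_forall fun t ↦ by positivity), hFTC,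
    ← ENNReal.ofReal_inv_of_pos (by linarith), ← ENNReal.ofReal_one,
    ← ENNReal.ofReal_add zero_le_one, add_sub_cancel]
  rw [sub_nonneg, one_le_inv₀ (by linarith)]; linarith

theorem inv_ofReal_eq_one_add_lintegral_add_le_one {s : ℝ} (hs : s ∈ Ioc 0 1) :
    (ENNReal.ofReal s)⁻¹ = 1 + ∫⁻ t in {t | s + t ≤ 1}, ENNReal.ofReal ((1 - t) ^ 2)⁻¹
      ∂volume.restrict (Ioc 0 1) := by
  obtain ⟨hs0, hs1⟩ := hs
  have h := inv_ofReal_one_sub_eq_one_add_lintegral (c := 1 - s) (by linarith) (by linarith)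
  rwa [sub_sub_cancel, ← restrict_Ioc_restrict_Iic (b := 1) (by linarith),
    ← preimage_const_add_Iic] at h

theorem inv_ofReal_one_sub_eq_one_add_lintegral_Iio {s : ℝ} (hs : s ∈ Ioo 0 1) :
    (ENNReal.ofReal (1 - s))⁻¹ = 1 + ∫⁻ t in Iio s, ENNReal.ofReal ((1 - t) ^ 2)⁻¹
      ∂volume.restrict (Ioc 0 1) := by
  rw [restrict_Ioc_restrict_Iio hs.2.le, inv_ofReal_one_sub_eq_one_add_lintegral hs.1.le hs.2]

/-- If `∫_t^1 a(s) ds ≥ ∫_0^{1−t} b(s) ds` for every `t ∈ [0,1]`, then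
`∫_0^1 b(s)/s ds ≤ ∫_0^1 a(s)/(1−s) ds` (extended-real-valued Lebesgue integrals). -/
theorem lintegral_div_le_of_tail_bounds (a b : ℝ → ENNReal)
    (ha : Measurable a) (hb : Measurable b)
    (h : ∀ t ∈ Set.Icc (0 : ℝ) 1,
      ∫⁻ s in Set.Ioc (0 : ℝ) (1 - t), b s ≤ ∫⁻ s in Set.Ioc t (1 : ℝ), a s) :
    ∫⁻ s in Set.Ioc (0 : ℝ) 1, b s / ENNReal.ofReal s ≤
      ∫⁻ s in Set.Ioc (0 : ℝ) 1, a s / ENNReal.ofReal (1 - s) := by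
  set μ := volume.restrict (Ioc (0 : ℝ) 1)
  set k : ℝ → ℝ≥0∞ := fun t ↦ ENNReal.ofReal ((1 - t) ^ 2)⁻¹
  have hk : Measurable k := by fun_prop
  have h_slice : ∀ t ∈ Ioc (0 : ℝ) 1,
      ∫⁻ s in {s | s + t ≤ 1}, b s ∂μ ≤ ∫⁻ s in Ioi t, a s ∂μ := by
    rintro t ⟨ht0, ht1⟩
    rw [show {s | s + t ≤ 1} = Iic (1 - t) from preimage_add_const_Iic t 1,
      restrict_Ioc_restrict_Iic (by linarith), restrict_Ioc_restrict_Ioi ht0.le]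
    exact h t ⟨ht0.le, ht1⟩
  have h_Ioo : ∀ᵐ s ∂μ, s ∈ Ioo 0 1 := by
    rw [show μ = volume.restrict (Ioo 0 1) from (Measure.restrict_congr_set Ioo_ae_eq_Ioc).symm]
    exact ae_restrict_mem measurableSet_Ioo
  calc ∫⁻ s, b s / ENNReal.ofReal s ∂μ
      = ∫⁻ s, b s + b s * ∫⁻ t in {t | s + t ≤ 1}, k t ∂μ ∂μ :=
        setLIntegral_congr_fun measurableSet_Ioc fun s hs ↦ by
          rw [div_eq_mul_inv, inv_ofReal_eq_one_add_lintegral_add_le_one hs, mul_add, mul_one]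
    _ = ∫⁻ s, b s ∂μ + ∫⁻ t, k t * ∫⁻ s in {s | s + t ≤ 1}, b s ∂μ ∂μ := by
        rw [lintegral_add_left hb]
        exact congrArg _ (lintegral_mul_setLIntegral_comm hb hk (r := fun s t ↦ s + t ≤ 1)
          (measurableSet_le (by fun_prop) (by fun_prop)))
    _ ≤ ∫⁻ s, a s ∂μ + ∫⁻ t, k t * ∫⁻ s in Ioi t, a s ∂μ ∂μ := by
        refine add_le_add (by simpa using h 0 ⟨le_rfl, zero_le_one⟩) ?_
        exact setLIntegral_mono' measurableSet_Ioc fun t ht ↦ by gcongr k t * ?_; exact h_slice t ht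
    _ = ∫⁻ s, a s + a s * ∫⁻ t in Iio s, k t ∂μ ∂μ := by
        rw [lintegral_add_left ha]
        exact congrArg _ (lintegral_mul_setLIntegral_comm hk ha (r := fun t s ↦ t < s)
          (measurableSet_lt (by fun_prop) (by fun_prop)))
    _ = ∫⁻ s, a s / ENNReal.ofReal (1 - s) ∂μ := lintegral_congr_ae <| h_Ioo.mono fun s hs ↦ by
        dsimp only
        rw [div_eq_mul_inv, inv_ofReal_one_sub_eq_one_add_lintegral_Iio hs, mul_add, mul_one]
end

section
/- Let (Ω, ℬ, P) be a probability space, let (𝒢_t)_{t∈[0,1]} be an increasing family of sub-σ-algebras of ℬ and (ℋ_t)_{t∈[0,1]} a decreasing family of sub-σ-algebras of ℬ such that, for every t ∈ [0,1], the σ-algebras 𝒢_t and ℋ_t are independent. Let X : Ω → ℝⁿ be square-integrable and 𝒢_1-measurable, and set M_t := E[X | 𝒢_t]. Let D ⊆ [0,1] be a set such that for every t ∈ D the random vector X − M_t is almost surely equal to an ℋ_t-measurable random vector. Then for every finite sequence t_1 ≤ t_2 ≤ ⋯ ≤ t_k of points of D, the random vectors M_{t_1}, M_{t_2} − M_{t_1},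 …, M_{t_k} − M_{t_{k−1}}, X − M_{t_k} are mutually independent; in particular, the process (M_t)_{t ∈ D} has independent increments over D. -/
/-!
Fix `j ≥ 1`. Since `𝒢` increases, the first `j` increments are `𝒢_{t_{j-1}}`-measurable. The
`j`-th increment is `(X - M_{t_{j-1}}) - (X - M_{t_j})`, and since `ℋ` decreases it is a.s. equal to
an `ℋ_{t_{j-1}}`-measurable vector. Hence each increment is independent of all the earlier ones,
and this sequential independence is mutual independence.
-/

open MeasureTheory ProbabilityTheory

/-- The extended sequence `0, M_{t_0}, M_{t_1}, …, M_{t_k}, X`, where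
`M_s = E[X | 𝒢 s]`: its consecutive differences are the increments
`M_{t_0}, M_{t_1} − M_{t_0}, …, M_{t_k} − M_{t_{k−1}}, X − M_{t_k}`. -/
noncomputable def extendedProcess {Ω : Type*} {mΩ : MeasurableSpace Ω} (P : Measure Ω)
    {n : ℕ} (𝒢 : ℝ → MeasurableSpace Ω) (X : Ω → EuclideanSpace ℝ (Fin n))
    {k : ℕ} (t : Fin (k + 1) → ℝ) (j : Fin (k + 3)) : Ω → EuclideanSpace ℝ (Fin n) :=
  if h0 : j.val = 0 then 0
  else if hl : j.val = k + 2 then X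
  else P[X | 𝒢 (t ⟨j.val - 1, by omega⟩)]

namespace ProbabilityTheory

variable {Ω ι β : Type*} {mΩ : MeasurableSpace Ω} {P : Measure Ω}

theorem iIndep_of_indep_biSup_lt [IsProbabilityMeasure P] [LinearOrder ι]
    {m : ι → MeasurableSpace Ω} (h : ∀ j, Indep (⨆ i < j, m i) (m j) P) : iIndep m P := by
  classical
  rw [iIndep_iff]
  intro S
  induction S using Finset.induction_on_max with
  | empty => simp
  | insert j S hlt ih =>
    intro s hs
    have hpast : MeasurableSet[⨆ i < j, m i] (⋂ i ∈ S, s i) :=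
      Finset.measurableSet_biInter _ fun i hi =>
        le_iSup₂ (f := fun i _ => m i) i (hlt i hi) _ (hs i (Finset.mem_insert_of_mem hi))
    rw [Finset.set_biInter_insert, Finset.prod_insert fun hj => (hlt j hj).false,
      Set.inter_comm, (Indep_iff _ _ _).1 (h j) _ _ hpast (hs j (Finset.mem_insert_self j S)),
      ih fun i hi => hs i (Finset.mem_insert_of_mem hi), mul_comm]

theorem Indep.comap_of_ae_eq [MeasurableSpace β] {m : MeasurableSpace Ω} {f g : Ω → β}
    (h : Indep m (MeasurableSpace.comap g inferInstance) P) (hfg : f =ᵐ[P] g) :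
    Indep m (MeasurableSpace.comap f inferInstance) P := by
  rw [Indep_iff] at h ⊢
  rintro A _ hA ⟨B, hB, rfl⟩
  have hpre : f ⁻¹' B =ᵐ[P] g ⁻¹' B := hfg.preimage B
  rw [measure_congr ((ae_eq_refl A).inter hpre), measure_congr hpre]
  exact h A _ hA ⟨B, hB, rfl⟩

theorem iIndepFun_of_indep_past_future [IsProbabilityMeasure P] [LinearOrder ι]
    [MeasurableSpace β] {f : ι → Ω → β} (𝒜 ℬ : ι → MeasurableSpace Ω)
    (hindep : ∀ j, Indep (𝒜 j) (ℬ j) P) (hpast : ∀ i j, i < j → Measurable[𝒜 j] (f i))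
    (hfuture : ∀ j, ¬IsMin j → ∃ g : Ω → β, Measurable[ℬ j] g ∧ f j =ᵐ[P] g) :
    iIndepFun f P := by
  rw [iIndepFun_iff_iIndep]
  refine iIndep_of_indep_biSup_lt fun j => ?_
  by_cases hj : IsMin j
  · have hbot : ⨆ i < j, MeasurableSpace.comap (f i) inferInstance = ⊥ := by
      simp [hj.not_lt]
    rw [hbot]
    exact indep_bot_left _
  · obtain ⟨g, hg, hfg⟩ := hfuture j hj
    exact (indep_of_indep_of_le (hindep j) (iSup₂_le fun i hi => (hpast i j hi).comap_le)
      hg.comap_le).comap_of_ae_eq hfg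

end ProbabilityTheory

section extendedProcess

variable {Ω : Type*} {mΩ : MeasurableSpace Ω} {P : Measure Ω} {n : ℕ}
  {𝒢 ℋ : ℝ → MeasurableSpace Ω} {X : Ω → EuclideanSpace ℝ (Fin n)} {k : ℕ}
  {t : Fin (k + 1) → ℝ}

theorem measurable_extendedProcess (h𝒢 : Monotone 𝒢) (ht : Monotone t) {l : Fin (k + 3)}
    (hl : l.val ≠ k + 2) {v : Fin (k + 1)} (hlv : l.val - 1 ≤ v.val) :
    Measurable[𝒢 (t v)] (extendedProcess P 𝒢 X t l) := by
  unfold extendedProcess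
  split_ifs
  · exact measurable_const
  · exact stronglyMeasurable_condExp.measurable.mono (h𝒢 (ht (Fin.mk_le_mk.2 hlv))) le_rfl

theorem exists_measurable_ae_eq_sub_extendedProcess (hℋ : Antitone ℋ) (ht : Monotone t)
    (hrev : ∀ i, ∃ Y : Ω → EuclideanSpace ℝ (Fin n), Measurable[ℋ (t i)] Y ∧
      ∀ᵐ ω ∂P, X ω - (P[X | 𝒢 (t i)]) ω = Y ω)
    {l : Fin (k + 3)} {v : Fin (k + 1)} (hvl : v.val + 1 ≤ l.val) :
    ∃ Y : Ω → EuclideanSpace ℝ (Fin n), Measurable[ℋ (t v)] Y ∧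
      X - extendedProcess P 𝒢 X t l =ᵐ[P] Y := by
  unfold extendedProcess
  split_ifs with h0 hlast
  · omega
  · exact ⟨0, measurable_const, by simp⟩
  · obtain ⟨Y, hY, hXY⟩ := hrev ⟨l.val - 1, by omega⟩
    exact ⟨Y, hY.mono (hℋ (ht (Fin.mk_le_mk.2 (by omega)))) le_rfl, hXY⟩

end extendedProcess

theorem independent_increments_of_time_reversed_measurability_general
    {Ω : Type*} {mΩ : MeasurableSpace Ω} (P : Measure Ω) [IsProbabilityMeasure P]
    {n : ℕ} (𝒢 ℋ : ℝ → MeasurableSpace Ω)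
    (h𝒢mono : ∀ s t : ℝ, s ≤ t → 𝒢 s ≤ 𝒢 t)
    (hℋanti : ∀ s t : ℝ, s ≤ t → ℋ t ≤ ℋ s)
    (hIndep : ∀ t ∈ Set.Icc (0 : ℝ) 1, Indep (𝒢 t) (ℋ t) P)
    (X : Ω → EuclideanSpace ℝ (Fin n))
    (D : Set ℝ) (hD : D ⊆ Set.Icc (0 : ℝ) 1)
    (hrev : ∀ t ∈ D, ∃ Y : Ω → EuclideanSpace ℝ (Fin n), Measurable[ℋ t] Y ∧
      ∀ᵐ ω ∂P, X ω - (P[X | 𝒢 t]) ω = Y ω)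
    (k : ℕ) (t : Fin (k + 1) → ℝ) (ht : Monotone t) (htD : ∀ i, t i ∈ D) :
    iIndepFun
      (fun i : Fin (k + 2) =>
        extendedProcess P 𝒢 X t i.succ - extendedProcess P 𝒢 X t i.castSucc) P := by
  have h𝒢 : Monotone 𝒢 := fun _ _ => h𝒢mono _ _
  have hℋ : Antitone ℋ := fun _ _ => hℋanti _ _
  -- Increment `j` is split off at time `t_{j-1}` (for `j = 0` the truncated `0 - 1` is harmless,
  -- as nothing precedes it).
  let s : Fin (k + 2) → ℝ := fun j => t ⟨j.val - 1, by omega⟩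
  refine iIndepFun_of_indep_past_future (fun j => 𝒢 (s j)) (fun j => ℋ (s j))
    (fun j => hIndep _ (hD (htD _))) (fun i j hij => ?_) (fun j hj => ?_)
  · have hij : i.val < j.val := hij
    exact (measurable_extendedProcess h𝒢 ht (l := i.succ) (by simp only [Fin.val_succ]; omega)
      (by simp only [Fin.val_succ]; omega)).sub (measurable_extendedProcess h𝒢 ht
        (l := i.castSucc) (by simp only [Fin.val_castSucc]; omega)
        (by simp only [Fin.val_castSucc]; omega))
  · have hj : j.val ≠ 0 := fun h => hj fun b _ => Fin.le_iff_val_le_val.2 (by omega)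
    obtain ⟨Y₁, hY₁, hXY₁⟩ := exists_measurable_ae_eq_sub_extendedProcess (l := j.castSucc)
      (v := ⟨j.val - 1, by omega⟩) hℋ ht (fun i => hrev _ (htD i))
      (by simp only [Fin.val_castSucc]; omega)
    obtain ⟨Y₂, hY₂, hXY₂⟩ := exists_measurable_ae_eq_sub_extendedProcess (l := j.succ)
      (v := ⟨j.val - 1, by omega⟩) hℋ ht (fun i => hrev _ (htD i))
      (by simp only [Fin.val_succ]; omega)
    refine ⟨Y₁ - Y₂, hY₁.sub hY₂, ?_⟩
    rw [← sub_sub_sub_cancel_left _ _ X]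
    exact hXY₁.sub hXY₂

/-- If `(𝒢_t)` is increasing, `(ℋ_t)` is decreasing, `𝒢_t` and `ℋ_t` are independent
for every `t ∈ [0,1]`, `X` is centered, square-integrable and `𝒢_1`-measurable,
and for every `t` in a set `D ⊆ [0,1]` the vector `X − E[X|𝒢_t]` is a.s. equal to
an `ℋ_t`-measurable random vector, then for every monotone finite sequence
`t_0 ≤ ⋯ ≤ t_k` in `D` the random vectors
`M_{t_0}, M_{t_1} − M_{t_0}, …, M_{t_k} − M_{t_{k−1}}, X − M_{t_k}` are mutually
independent, where `M_s := E[X | 𝒢_s]`. -/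
theorem independent_increments_of_time_reversed_measurability
    {Ω : Type*} {mΩ : MeasurableSpace Ω} (P : Measure Ω) [IsProbabilityMeasure P]
    {n : ℕ} (𝒢 ℋ : ℝ → MeasurableSpace Ω)
    (h𝒢le : ∀ t, 𝒢 t ≤ mΩ) (hℋle : ∀ t, ℋ t ≤ mΩ)
    (h𝒢mono : ∀ s t : ℝ, s ≤ t → 𝒢 s ≤ 𝒢 t)
    (hℋanti : ∀ s t : ℝ, s ≤ t → ℋ t ≤ ℋ s)
    (hIndep : ∀ t ∈ Set.Icc (0 : ℝ) 1, Indep (𝒢 t) (ℋ t) P)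
    (X : Ω → EuclideanSpace ℝ (Fin n)) (hX : MemLp X 2 P)
    (hXmeas : Measurable[𝒢 1] X) (hcent : ∫ ω, X ω ∂P = 0)
    (D : Set ℝ) (hD : D ⊆ Set.Icc (0 : ℝ) 1)
    (hrev : ∀ t ∈ D, ∃ Y : Ω → EuclideanSpace ℝ (Fin n), Measurable[ℋ t] Y ∧
      ∀ᵐ ω ∂P, X ω - (P[X | 𝒢 t]) ω = Y ω)
    (k : ℕ) (t : Fin (k + 1) → ℝ) (ht : Monotone t) (htD : ∀ i, t i ∈ D) :
    iIndepFun
      (fun i : Fin (k + 2) =>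
        extendedProcess P 𝒢 X t i.succ - extendedProcess P 𝒢 X t i.castSucc) P :=
  independent_increments_of_time_reversed_measurability_general (mΩ := mΩ) P 𝒢 ℋ h𝒢mono hℋanti
    hIndep X D hD hrev k t ht htD
end

section
/- For every α > 0, the Lebesgue integral over t ∈ [0,1] of (α/(1 − t + αt) − 1)² / (1 − t) equals α − 1 − log α; that is, ∫_0^1 (α/(1 + (α−1)t) − 1)²/(1−t) dt = α − 1 − log α. Consequently ½∫_0^1 (α/(1−t+αt) − 1)²/(1−t) dt = D(N(0,α)‖N(0,1)). -/
/-! On `[0, 1]` the integrand equals `(α - 1)² (1 - t) / (1 - t + α t)²`, the derivative of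
`-α / (1 - t + α t) - log (1 - t + α t)`, so the integral is `α - 1 - log α`.
The log-likelihood ratio of `N(0, v)` against `N(0, w)` is the quadratic
`(log w - log v) / 2 + (1 / w - 1 / v) x² / 2`, and since `N(0, v)` has second moment `v` its mean
is `(v / w - 1 - log (v / w)) / 2`; at `v = α`, `w = 1` this is half the integral. -/

open MeasureTheory ProbabilityTheory ENNReal

/-- The relative entropy (Kullback–Leibler divergence) `D(μ‖γ)`. -/
noncomputable def relEntropy {E : Type*} [MeasurableSpace E] (μ γ : Measure E) : ℝ≥0∞ :=
  open scoped Classical in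
  if μ ≪ γ ∧ Integrable (llr μ γ) μ then ENNReal.ofReal (∫ x, llr μ γ x ∂μ) else ∞

open Set
open scoped Real
open scoped NNReal

section DriftIntegral

variable {α t : ℝ}

lemma one_sub_add_mul_pos (hα : 0 < α) (ht : t ∈ Icc (0 : ℝ) 1) : 0 < 1 - t + α * t := by
  obtain ⟨h0, h1⟩ := ht
  rcases h1.lt_or_eq with h1 | rfl
  · nlinarith [mul_nonneg hα.le h0]
  · simpa using hα

lemma div_sub_one_sq_div_one_sub (h : 1 - t + α * t ≠ 0) :
    (α / (1 - t + α * t) - 1) ^ 2 / (1 - t) = (α - 1) ^ 2 * (1 - t) / (1 - t + α * t) ^ 2 := by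
  rcases eq_or_ne t 1 with rfl | ht
  · simp -- both sides vanish at `t = 1`, the left one through `x / 0 = 0`
  · have : 1 - t ≠ 0 := sub_ne_zero.mpr ht.symm
    field_simp
    ring

lemma hasDerivAt_neg_div_sub_log (h : 1 - t + α * t ≠ 0) :
    HasDerivAt (fun s => -α / (1 - s + α * s) - Real.log (1 - s + α * s))
      ((α - 1) ^ 2 * (1 - t) / (1 - t + α * t) ^ 2) t := by
  have hD : HasDerivAt (fun s => 1 - s + α * s) (α - 1) t :=
    (((hasDerivAt_id' t).const_sub 1).add ((hasDerivAt_id' t).const_mul α)).congr_deriv (by ring)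
  refine (((hasDerivAt_const t (-α)).div hD h).sub (hD.log h)).congr_deriv ?_
  field_simp
  ring

theorem integral_div_sub_one_sq_div_one_sub (hα : 0 < α) :
    ∫ t in Ioc (0 : ℝ) 1, (α / (1 - t + α * t) - 1) ^ 2 / (1 - t) = α - 1 - Real.log α := by
  have hD : ∀ t ∈ uIcc (0 : ℝ) 1, 1 - t + α * t ≠ 0 := fun t ht =>
    (one_sub_add_mul_pos hα (by rwa [uIcc_of_le zero_le_one] at ht)).ne'
  have hint :
      IntervalIntegrable (fun t => (α - 1) ^ 2 * (1 - t) / (1 - t + α * t) ^ 2) volume 0 1 :=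
    (ContinuousOn.div (by fun_prop) (by fun_prop) fun t ht => pow_ne_zero 2 (hD t ht))
      |>.intervalIntegrable
  rw [← intervalIntegral.integral_of_le zero_le_one,
    intervalIntegral.integral_congr fun t ht => div_sub_one_sq_div_one_sub (hD t ht),
    intervalIntegral.integral_eq_sub_of_hasDerivAt
      (fun t ht => hasDerivAt_neg_div_sub_log (hD t ht)) hint]
  norm_num [hα.ne']
  ring

end DriftIntegral

lemma log_gaussianPDFReal (μ : ℝ) {v : ℝ≥0} (hv : v ≠ 0) (x : ℝ) :
    Real.log (gaussianPDFReal μ v x) = -Real.log (2 * π * v) / 2 - (x - μ) ^ 2 / (2 * v) := by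
  have : (0 : ℝ) < 2 * π * v := by positivity
  rw [gaussianPDFReal, Real.log_mul (by positivity) (Real.exp_ne_zero _), Real.log_inv,
    Real.log_sqrt this.le, Real.log_exp]
  ring

lemma rnDeriv_gaussianReal_gaussianReal (μ₁ μ₂ : ℝ) (v : ℝ≥0) {w : ℝ≥0} (hw : w ≠ 0) :
    ∂(gaussianReal μ₁ v)/∂(gaussianReal μ₂ w) =ᵐ[volume]
      fun x => (gaussianPDF μ₂ w x)⁻¹ * gaussianPDF μ₁ v x := by
  rw [gaussianReal_of_var_ne_zero μ₂ hw]
  filter_upwards [Measure.rnDeriv_withDensity_right (gaussianReal μ₁ v) volume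
      (measurable_gaussianPDF μ₂ w).aemeasurable
      (ae_of_all _ fun x => (gaussianPDF_pos μ₂ hw x).ne')
      (ae_of_all _ fun _ => gaussianPDF_ne_top),
    rnDeriv_gaussianReal μ₁ v] with x hx hx'
  rw [hx, hx']

lemma llr_gaussianReal (μ₁ μ₂ : ℝ) {v w : ℝ≥0} (hv : v ≠ 0) (hw : w ≠ 0) :
    llr (gaussianReal μ₁ v) (gaussianReal μ₂ w) =ᵐ[gaussianReal μ₁ v]
      fun x => Real.log (gaussianPDFReal μ₁ v x) - Real.log (gaussianPDFReal μ₂ w x) := by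
  filter_upwards [(gaussianReal_absolutelyContinuous μ₁ hv).ae_eq
    (rnDeriv_gaussianReal_gaussianReal μ₁ μ₂ v hw)] with x hx
  rw [llr_def]
  simp only [hx, toReal_mul, toReal_inv, toReal_gaussianPDF]
  rw [Real.log_mul (inv_ne_zero (gaussianPDFReal_pos _ _ _ hw).ne')
    (gaussianPDFReal_pos _ _ _ hv).ne', Real.log_inv]
  ring

lemma integral_sq_gaussianReal_zero (v : ℝ≥0) : ∫ x, x ^ 2 ∂gaussianReal 0 v = v := by
  rw [← variance_of_integral_eq_zero aemeasurable_id' integral_id_gaussianReal,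
    variance_fun_id_gaussianReal]

theorem relEntropy_gaussianReal_zero {v w : ℝ≥0} (hv : v ≠ 0) (hw : w ≠ 0) :
    relEntropy (gaussianReal 0 v) (gaussianReal 0 w) =
      ENNReal.ofReal ((v / w - 1 - Real.log (v / w)) / 2) := by
  have hv' : (v : ℝ) ≠ 0 := by exact_mod_cast hv
  have hw' : (w : ℝ) ≠ 0 := by exact_mod_cast hw
  have hllr : llr (gaussianReal 0 v) (gaussianReal 0 w) =ᵐ[gaussianReal 0 v]
      fun x => (Real.log w - Real.log v) / 2 + ((w : ℝ)⁻¹ - (v : ℝ)⁻¹) / 2 * x ^ 2 := by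
    filter_upwards [llr_gaussianReal 0 0 hv hw] with x hx
    rw [hx, log_gaussianPDFReal 0 hv, log_gaussianPDFReal 0 hw,
      Real.log_mul (by positivity) hv', Real.log_mul (by positivity) hw']
    field_simp
    ring
  have hsq : Integrable (fun x : ℝ => x ^ 2) (gaussianReal 0 v) :=
    (memLp_id_gaussianReal 2).integrable_sq
  have hac : gaussianReal 0 v ≪ gaussianReal 0 w :=
    (gaussianReal_absolutelyContinuous 0 hv).trans (gaussianReal_absolutelyContinuous' 0 hw)
  rw [relEntropy, if_pos ⟨hac, ((integrable_const _).add (hsq.const_mul _)).congr hllr.symm⟩,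
    integral_congr_ae hllr,
    integral_add (integrable_const _) (hsq.const_mul _), integral_const_mul,
    integral_sq_gaussianReal_zero, Real.log_div hv' hw']
  congr 1
  simp only [integral_const, probReal_univ, smul_eq_mul, one_mul]
  field_simp
  ring

/-- `∫_0^1 (α/(1−t+αt) − 1)²/(1−t) dt = α − 1 − log α`, and half of it equals
`D(N(0,α)‖N(0,1))`. -/
theorem integral_optimal_drift (α : ℝ) (hα : 0 < α) :
    (∫ t in Set.Ioc (0 : ℝ) 1, (α / (1 - t + α * t) - 1) ^ 2 / (1 - t)) =
      α - 1 - Real.log α ∧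
    ENNReal.ofReal
        ((1 / 2) * ∫ t in Set.Ioc (0 : ℝ) 1, (α / (1 - t + α * t) - 1) ^ 2 / (1 - t)) =
      relEntropy (gaussianReal 0 α.toNNReal) (gaussianReal 0 1) := by
  have hintegral := integral_div_sub_one_sq_div_one_sub hα
  refine ⟨hintegral, ?_⟩
  rw [hintegral, relEntropy_gaussianReal_zero (by simpa using hα) one_ne_zero,
    Real.coe_toNNReal α hα.le, NNReal.coe_one, div_one]
  congr 1
  ring
end
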